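/- Let w be real weights on a tripartite graph on I ∪ J ∪ K and let λ be sufficiently large (larger than 5·max|w| suffices, viewed as making the construction work). Define symmetric weights w' on the complete graph on V = I ∪ J ∪ K by: w'_{i,j} = w_{i,j} for (i,j) ∈ I×J; w'_{ℓ₁,ℓ₂} = w_{ℓ₁,ℓ₂} + 2λ for pairs within the same part; w'_{ℓ,k} = w_{ℓ,k} + 5λ for (ℓ,k) ∈ (I∪J)×K; and set α = 5λ. Then the complete graph with weights w' contains three distinct vertices x,y,z with min{w'_{x,z}, w'_{y,z}} − w'_{x,y} ≥ α if and only if there exists (i,j,k) ∈ I×J×K with min{w_{i,k}, w_{k,j}} − w_{i,j} ≥ 0. -/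

import Mathlib

/-!
Write `shiftWeight w λ = w + s`, where `s u v ∈ {0, 2λ, 5λ}` (`partShift`) depends only on the
parts of `u` and `v`. Since every weight lies in `(-λ/5, λ/5)`, a positive triangle `x, y, z` at
threshold `5λ` forces `s x y < λ` and `s x z > 2λ`, i.e. `{x, y}` is an `I`–`J` pair and `z ∈ K`. On such
triples the shifts are `0`, `5λ`, `5λ`, and the condition becomes the tripartite one at
threshold `0`.
-/

/-- The shifted weights of the reduction from the tripartite positive triangle problem
to the positive triangle problem: edges between `I` and `J` keep their weight, edges
inside a part are shifted by `2λ`, and edges between `I ∪ J` and `K` are shifted by `5λ`. -/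
noncomputable def shiftWeight {I J K : Type*} (w : (I ⊕ J ⊕ K) → (I ⊕ J ⊕ K) → ℝ)
    (lam : ℝ) : (I ⊕ J ⊕ K) → (I ⊕ J ⊕ K) → ℝ :=
  fun u v => w u v +
    match u, v with
    | Sum.inl _, Sum.inl _ => 2 * lam
    | Sum.inl _, Sum.inr (Sum.inl _) => 0
    | Sum.inr (Sum.inl _), Sum.inl _ => 0
    | Sum.inl _, Sum.inr (Sum.inr _) => 5 * lam
    | Sum.inr (Sum.inr _), Sum.inl _ => 5 * lam
    | Sum.inr (Sum.inl _), Sum.inr (Sum.inl _) => 2 * lam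
    | Sum.inr (Sum.inl _), Sum.inr (Sum.inr _) => 5 * lam
    | Sum.inr (Sum.inr _), Sum.inr (Sum.inl _) => 5 * lam
    | Sum.inr (Sum.inr _), Sum.inr (Sum.inr _) => 2 * lam

def IsPositiveTriangle {V : Type*} (w : V → V → ℝ) (α : ℝ) (x y z : V) : Prop :=
  min (w x z) (w y z) - w x y ≥ α

theorem isPositiveTriangle_comm {V : Type*} {w : V → V → ℝ} (hsymm : ∀ u v, w u v = w v u)
    {α : ℝ} {x y z : V} : IsPositiveTriangle w α x y z ↔ IsPositiveTriangle w α y x z := by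
  rw [IsPositiveTriangle, IsPositiveTriangle, min_comm, hsymm x y]

namespace ShiftWeight

variable {I J K : Type*}

def partShift (lam : ℝ) : I ⊕ J ⊕ K → I ⊕ J ⊕ K → ℝ
  | .inl _, .inl _ => 2 * lam
  | .inl _, .inr (.inl _) => 0
  | .inr (.inl _), .inl _ => 0
  | .inl _, .inr (.inr _) => 5 * lam
  | .inr (.inr _), .inl _ => 5 * lam
  | .inr (.inl _), .inr (.inl _) => 2 * lam
  | .inr (.inl _), .inr (.inr _) => 5 * lam
  | .inr (.inr _), .inr (.inl _) => 5 * lam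
  | .inr (.inr _), .inr (.inr _) => 2 * lam

theorem shiftWeight_eq_add (w : I ⊕ J ⊕ K → I ⊕ J ⊕ K → ℝ) (lam : ℝ) (u v : I ⊕ J ⊕ K) :
    shiftWeight w lam u v = w u v + partShift lam u v := by
  rcases u with _ | _ | _ <;> rcases v with _ | _ | _ <;> rfl

theorem partShift_comm (lam : ℝ) (u v : I ⊕ J ⊕ K) : partShift lam u v = partShift lam v u := by
  rcases u with _ | _ | _ <;> rcases v with _ | _ | _ <;> rfl

theorem shiftWeight_comm {w : I ⊕ J ⊕ K → I ⊕ J ⊕ K → ℝ} (hsymm : ∀ u v, w u v = w v u)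
    (lam : ℝ) (u v : I ⊕ J ⊕ K) : shiftWeight w lam u v = shiftWeight w lam v u := by
  rw [shiftWeight_eq_add, shiftWeight_eq_add, hsymm, partShift_comm]

variable {lam : ℝ}

theorem partShift_nonneg (hlam : 0 ≤ lam) (u v : I ⊕ J ⊕ K) : 0 ≤ partShift lam u v := by
  rcases u with _ | _ | _ <;> rcases v with _ | _ | _ <;> simp only [partShift] <;> linarith

theorem partShift_le (hlam : 0 ≤ lam) (u v : I ⊕ J ⊕ K) : partShift lam u v ≤ 5 * lam := by
  rcases u with _ | _ | _ <;> rcases v with _ | _ | _ <;> simp only [partShift] <;> linarith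

theorem exists_eq_of_partShift_lt (hlam : 0 < lam) {u v : I ⊕ J ⊕ K} (h : partShift lam u v < lam) :
    (∃ i j, u = .inl i ∧ v = .inr (.inl j)) ∨ ∃ i j, u = .inr (.inl j) ∧ v = .inl i := by
  rcases u with i | j | _ <;> rcases v with i' | j' | _ <;> simp only [partShift] at h
  all_goals first
    | exact .inl ⟨i, j', rfl, rfl⟩
    | exact .inr ⟨i', j, rfl, rfl⟩
    | (exfalso; linarith)

theorem exists_eq_inr_inr_of_two_mul_lt_partShift (hlam : 0 < lam) {u v : I ⊕ J ⊕ K}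
    (h : 2 * lam < partShift lam u v) :
    (∃ k, v = .inr (.inr k)) ∨ ∃ k, u = .inr (.inr k) := by
  rcases u with _ | _ | k <;> rcases v with _ | _ | k' <;> simp only [partShift] at h
  all_goals first
    | exact .inl ⟨k', rfl⟩
    | exact .inr ⟨k, rfl⟩
    | (exfalso; linarith)

variable {w : I ⊕ J ⊕ K → I ⊕ J ⊕ K → ℝ}

theorem partShift_bounds_of_isPositiveTriangle (hw : ∀ u v, 5 * |w u v| < lam)
    {x y z : I ⊕ J ⊕ K} (h : IsPositiveTriangle (shiftWeight w lam) (5 * lam) x y z) :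
    partShift lam x y < lam ∧ 2 * lam < partShift lam x z := by
  have hpos : 0 < lam := by linarith [abs_nonneg (w x x), hw x x]
  have hside := (min_le_left _ _).trans' (le_sub_iff_add_le.mp h)
  rw [shiftWeight_eq_add, shiftWeight_eq_add] at hside
  have hwxy := abs_lt.mp (show |w x y| < lam / 5 by linarith [hw x y])
  have hwxz := abs_lt.mp (show |w x z| < lam / 5 by linarith [hw x z])
  constructor
  · linarith [partShift_le hpos.le x z]
  · linarith [partShift_nonneg hpos.le x y]

theorem isPositiveTriangle_shiftWeight_iff (i : I) (j : J) (k : K) :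
    IsPositiveTriangle (shiftWeight w lam) (5 * lam) (.inl i) (.inr (.inl j)) (.inr (.inr k)) ↔
      IsPositiveTriangle w 0 (.inl i) (.inr (.inl j)) (.inr (.inr k)) := by
  simp only [IsPositiveTriangle, shiftWeight_eq_add, partShift, min_add_add_right]
  constructor <;> intro h <;> linarith

end ShiftWeight

open ShiftWeight in
theorem shifted_positive_triangle_iff_general {I J K : Type*}
    (w : (I ⊕ J ⊕ K) → (I ⊕ J ⊕ K) → ℝ) (hsymm : ∀ u v, w u v = w v u)
    (lam : ℝ) (hlam : ∀ u v, 5 * |w u v| + 1 < lam) :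
    (∃ x y z : I ⊕ J ⊕ K, x ≠ y ∧ y ≠ z ∧ x ≠ z ∧
        min (shiftWeight w lam x z) (shiftWeight w lam y z) - shiftWeight w lam x y ≥ 5 * lam)
    ↔ (∃ (i : I) (j : J) (k : K),
        min (w (Sum.inl i) (Sum.inr (Sum.inr k))) (w (Sum.inr (Sum.inl j)) (Sum.inr (Sum.inr k)))
          - w (Sum.inl i) (Sum.inr (Sum.inl j)) ≥ 0) := by
  have hw : ∀ u v, 5 * |w u v| < lam := fun u v => by linarith [hlam u v]
  constructor
  · rintro ⟨x, y, z, -, -, -, h⟩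
    have hpos : 0 < lam := by linarith [abs_nonneg (w x x), hw x x]
    obtain ⟨hxy, hxz⟩ := partShift_bounds_of_isPositiveTriangle hw h
    rcases exists_eq_inr_inr_of_two_mul_lt_partShift hpos hxz with ⟨k, rfl⟩ | ⟨k, rfl⟩
    · rcases exists_eq_of_partShift_lt hpos hxy with ⟨i, j, rfl, rfl⟩ | ⟨i, j, rfl, rfl⟩
      · exact ⟨i, j, k, (isPositiveTriangle_shiftWeight_iff i j k).mp h⟩
      · have h' := (isPositiveTriangle_comm (shiftWeight_comm hsymm lam)).mp h
        exact ⟨i, j, k, (isPositiveTriangle_shiftWeight_iff i j k).mp h'⟩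
    · rcases exists_eq_of_partShift_lt hpos hxy with ⟨i, j, ⟨⟩, -⟩ | ⟨i, j, ⟨⟩, -⟩
  · rintro ⟨i, j, k, h⟩
    exact ⟨.inl i, .inr (.inl j), .inr (.inr k), by simp, by simp, by simp,
      (isPositiveTriangle_shiftWeight_iff i j k).mpr h⟩

/-- For `λ` large enough (e.g. `λ > 5 max |w| + 1`), the complete graph on `I ∪ J ∪ K`
with the shifted weights has a positive triangle with threshold `α = 5λ` if and only if
the original tripartite graph has a tripartite positive triangle. -/
theorem shifted_positive_triangle_iff {I J K : Type*} [Fintype I] [Fintype J] [Fintype K]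
    (w : (I ⊕ J ⊕ K) → (I ⊕ J ⊕ K) → ℝ) (hsymm : ∀ u v, w u v = w v u)
    (lam : ℝ) (hlam : ∀ u v, 5 * |w u v| + 1 < lam) :
    (∃ x y z : I ⊕ J ⊕ K, x ≠ y ∧ y ≠ z ∧ x ≠ z ∧
        min (shiftWeight w lam x z) (shiftWeight w lam y z) - shiftWeight w lam x y ≥ 5 * lam)
    ↔ (∃ (i : I) (j : J) (k : K),
        min (w (Sum.inl i) (Sum.inr (Sum.inr k))) (w (Sum.inr (Sum.inl j)) (Sum.inr (Sum.inr k)))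
          - w (Sum.inl i) (Sum.inr (Sum.inl j)) ≥ 0) :=
  shifted_positive_triangle_iff_general w hsymm lam hlam
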